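/- The contact form ω = Σ_{i=1}^{2p} Σ_{j=1}^{p} (a_{i,2j} da_{i,2j−1} − a_{i,2j−1} da_{i,2j}) on SL(2p,ℝ) is invariant under left translation by a ∈ SL(2p,ℝ) if and only if a ∈ SO(2p). In particular, SO(2p) is the maximal subgroup of SL(2p,ℝ) leaving ω left-invariant. -/

import Mathlib

open Matrix

/-- The column index `2j - 1` (1-indexed), first member of the `j`-th pair. -/
def colA (p : ℕ) (j : Fin p) : Fin (2 * p) := ⟨2 * j.val, by have := j.isLt; omega⟩

/-- The column index `2j` (1-indexed), second member of the `j`-th pair. -/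
def colB (p : ℕ) (j : Fin p) : Fin (2 * p) := ⟨2 * j.val + 1, by have := j.isLt; omega⟩

/-- The Pfaffian form `ω = Σ_{i,j} (a_{i,2j} da_{i,2j-1} - a_{i,2j-1} da_{i,2j})`
at the point `M`, evaluated on the tangent vector `X`. -/
def omegaFun (p : ℕ) (M X : Matrix (Fin (2 * p)) (Fin (2 * p)) ℝ) : ℝ :=
  ∑ i : Fin (2 * p), ∑ j : Fin p,
    (M i (colB p j) * X i (colA p j) - M i (colA p j) * X i (colB p j))

/-! On the interleaved basis `(e₁, e₂), …, (e₂ₚ₋₁, e₂ₚ)` let `J` be the standard symplectic matrix;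
then `ω_M(X) = -tr(J Mᵀ X)`, so `(L_a)^* ω` at `b` is `ω` at `b` evaluated on `aᵀ a X`, and
`a ∈ SO(2p)` leaves `ω` invariant. Conversely, at `b = 1` the tangent vectors are the traceless
matrices, and `S = aᵀ a - 1` satisfies `tr(J S X) = 0` for all of them. As `J` is skew and `S`
symmetric, `J S` is itself traceless; `X = (J S)ᵀ` then gives `tr(J S (J S)ᵀ) = 0`, hence `J S = 0`,
and `S = 0` because `J² = -1`. -/

lemma colA_injective (p : ℕ) : Function.Injective (colA p) := fun j j' h => by
  simp only [colA, Fin.mk.injEq] at h; exact Fin.ext (by omega)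

lemma colB_injective (p : ℕ) : Function.Injective (colB p) := fun j j' h => by
  simp only [colB, Fin.mk.injEq] at h; exact Fin.ext (by omega)

lemma colA_ne_colB (p : ℕ) (j j' : Fin p) : colA p j ≠ colB p j' := by
  simp only [colA, colB, ne_eq, Fin.mk.injEq]; omega

lemma exists_eq_colA_or_eq_colB {p : ℕ} (i : Fin (2 * p)) :
    ∃ j : Fin p, colA p j = i ∨ colB p j = i := by
  refine ⟨⟨i / 2, by omega⟩, ?_⟩
  simp only [colA, colB, Fin.ext_iff]
  omega

noncomputable def colEquiv (p : ℕ) : Fin p ⊕ Fin p ≃ Fin (2 * p) :=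
  Equiv.ofBijective (Sum.elim (colA p) (colB p))
    ⟨(colA_injective p).sumElim (colB_injective p) (colA_ne_colB p), fun i => by
      obtain ⟨j, hj | hj⟩ := exists_eq_colA_or_eq_colB i
      exacts [⟨.inl j, hj⟩, ⟨.inr j, hj⟩]⟩

@[simp] lemma colEquiv_inl (p : ℕ) (j : Fin p) : colEquiv p (.inl j) = colA p j := rfl

@[simp] lemma colEquiv_inr (p : ℕ) (j : Fin p) : colEquiv p (.inr j) = colB p j := rfl

noncomputable def interleavedJ (p : ℕ) : Matrix (Fin (2 * p)) (Fin (2 * p)) ℝ :=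
  reindex (colEquiv p) (colEquiv p) (J (Fin p) ℝ)

lemma interleavedJ_transpose (p : ℕ) : (interleavedJ p)ᵀ = -interleavedJ p := by
  rw [interleavedJ, transpose_reindex, J_transpose]
  rfl

lemma interleavedJ_mul_self (p : ℕ) : interleavedJ p * interleavedJ p = -1 := by
  rw [interleavedJ, reindex_apply, submatrix_mul_equiv, J_squared,
    ← submatrix_one_equiv (colEquiv p).symm]
  rfl

lemma trace_interleavedJ_mul (p : ℕ) (N : Matrix (Fin (2 * p)) (Fin (2 * p)) ℝ) :
    trace (interleavedJ p * N) = ∑ j, (N (colA p j) (colB p j) - N (colB p j) (colA p j)) := by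
  simp only [trace, diag, interleavedJ, mul_apply, ← (colEquiv p).sum_comp,
    Fintype.sum_sum_type, reindex_apply, submatrix_apply, Equiv.symm_apply_apply, J,
    fromBlocks_apply₁₁, fromBlocks_apply₁₂, fromBlocks_apply₂₁, fromBlocks_apply₂₂,
    colEquiv_inl, colEquiv_inr, Matrix.zero_apply, Matrix.neg_apply, one_apply, zero_mul,
    neg_mul, ite_mul, one_mul, Finset.sum_const_zero, Finset.sum_neg_distrib, Finset.sum_ite_eq,
    Finset.mem_univ, if_true, zero_add, add_zero, Finset.sum_sub_distrib]
  ring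

lemma omegaFun_eq_neg_trace (p : ℕ) (M X : Matrix (Fin (2 * p)) (Fin (2 * p)) ℝ) :
    omegaFun p M X = -trace (interleavedJ p * (Mᵀ * X)) := by
  rw [trace_interleavedJ_mul, omegaFun, Finset.sum_comm, ← Finset.sum_neg_distrib]
  simp only [Finset.sum_sub_distrib, mul_apply, transpose_apply, neg_sub]

lemma eq_zero_of_forall_trace_mul_eq_zero {n : Type*} [Fintype n] [DecidableEq n]
    {J S : Matrix n n ℝ} (hJ : Jᵀ = -J) (hJ2 : J * J = -1) (hS : S.IsSymm)
    (h : ∀ X, trace X = 0 → trace (J * S * X) = 0) : S = 0 := by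
  have htr : trace (J * S)ᵀ = 0 := by
    have : trace (J * S) = -trace (J * S) :=
      calc trace (J * S) = trace (J * S)ᵀ := (trace_transpose _).symm
        _ = -trace (J * S) := by
          rw [transpose_mul, hS.eq, hJ, Matrix.mul_neg, trace_neg, trace_mul_comm]
    rw [trace_transpose]; linarith
  have hJS : J * S = 0 := by
    rw [← trace_mul_conjTranspose_self_eq_zero_iff, conjTranspose_eq_transpose_of_trivial]
    exact h _ htr
  calc S = -(J * J) * S := by rw [hJ2, neg_neg, Matrix.one_mul]
    _ = 0 := by rw [Matrix.neg_mul, Matrix.mul_assoc, hJS, Matrix.mul_zero, neg_zero]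

lemma omegaFun_mul_mul (p : ℕ) (a b X : Matrix (Fin (2 * p)) (Fin (2 * p)) ℝ) :
    omegaFun p (a * b) (a * X) = omegaFun p b (aᵀ * a * X) := by
  rw [omegaFun_eq_neg_trace, omegaFun_eq_neg_trace, transpose_mul, Matrix.mul_assoc,
    ← Matrix.mul_assoc aᵀ, Matrix.mul_assoc]

theorem left_invariance_iff_SO_general (p : ℕ)
    (a : Matrix (Fin (2 * p)) (Fin (2 * p)) ℝ) :
    (∀ b X : Matrix (Fin (2 * p)) (Fin (2 * p)) ℝ, b.det = 1 →
        (b.adjugate * X).trace = 0 →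
        omegaFun p (a * b) (a * X) = omegaFun p b X) ↔
      aᵀ * a = 1 := by
  refine ⟨fun h => ?_, fun h b X _ _ => by rw [omegaFun_mul_mul, h, Matrix.one_mul]⟩
  have hS : (aᵀ * a - 1).IsSymm := (isSymm_transpose_mul_self a).sub isSymm_one
  refine sub_eq_zero.mp <| eq_zero_of_forall_trace_mul_eq_zero (interleavedJ_transpose p)
    (interleavedJ_mul_self p) hS fun X hX => ?_
  have hX1 := h 1 X det_one (by rwa [adjugate_one, Matrix.one_mul])
  rw [omegaFun_mul_mul, omegaFun_eq_neg_trace, omegaFun_eq_neg_trace, transpose_one,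
    Matrix.one_mul, Matrix.one_mul] at hX1
  rw [Matrix.mul_assoc, Matrix.sub_mul, Matrix.one_mul, Matrix.mul_sub, trace_sub]
  linarith

/-- The contact form `ω` on `SL(2p,ℝ)` is invariant under left translation
`L_a : b ↦ a b` (as a form on `SL(2p,ℝ)`, i.e. at points `b` of `SL(2p,ℝ)` and on
tangent vectors `X` to `SL(2p,ℝ)` at `b`) if and only if `a ∈ SO(2p)`; thus
`SO(2p)` is the maximal subgroup of `SL(2p,ℝ)` leaving `ω` left-invariant. -/
theorem left_invariance_iff_SO (p : ℕ) (hp : 0 < p)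
    (a : Matrix (Fin (2 * p)) (Fin (2 * p)) ℝ) (ha : a.det = 1) :
    (∀ b X : Matrix (Fin (2 * p)) (Fin (2 * p)) ℝ, b.det = 1 →
        (b.adjugate * X).trace = 0 →
        omegaFun p (a * b) (a * X) = omegaFun p b X) ↔
      aᵀ * a = 1 :=
  left_invariance_iff_SO_general p a
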